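/- arXiv:2203.13492 — 4 statements merged into one kernel-verified Lean document; each statement's English description precedes it below -/
import Mathlib

section
/- If a configuration s of algorithm A_MIS on a finite simple graph G is stable (i.e., no vertex is enabled by rule R1 or rule R2), then the set I(s) = {v : s(v) = IN} is a maximal independent set of G. -/
/-- Degree of a vertex: the number of its neighbors. -/
noncomputable def deg {V : Type*} (G : SimpleGraph V) (v : V) : ℕ :=
  Nat.card (G.neighborSet v)

/-- Maximum degree Δ of a finite graph. -/
noncomputable def maxDeg {V : Type*} [Fintype V] (G : SimpleGraph V) : ℕ :=
  Finset.univ.sup (deg G)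

/-- A configuration assigns each vertex a state: `true` = IN, `false` = OUT.
Vertex `v` is enabled in `s` iff rule R1 applies (`s v = OUT` and
`I≤(v,s) = {w ∈ N(v) : deg w ≤ deg v ∧ s w = IN}` is empty) or rule R2 applies
(`s v = IN` and `I≤(v,s)` is nonempty). -/
def Enabled {V : Type*} (G : SimpleGraph V) (s : V → Bool) (v : V) : Prop :=
  (s v = false ∧ ∀ w, G.Adj v w → deg G w ≤ deg G v → s w = false) ∨
  (s v = true ∧ ∃ w, G.Adj v w ∧ deg G w ≤ deg G v ∧ s w = true)

/-- A move of the central scheduler: flip the state of one enabled vertex. -/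
def Move {V : Type*} [DecidableEq V] (G : SimpleGraph V) (s s' : V → Bool) : Prop :=
  ∃ v, Enabled G s v ∧ s' = Function.update s v (!s v)

/-- If a configuration of A_MIS is stable, then `I(s) = {v : s v = IN}` is a
maximal independent set: it is independent, and every vertex is in it or
adjacent to a vertex in it. -/
theorem stmt0 {V : Type*} [Fintype V] (G : SimpleGraph V) (s : V → Bool)
    (hstable : ∀ v, ¬ Enabled G s v) :
    (∀ v ∈ {v | s v = true}, ∀ w ∈ {v | s v = true}, ¬ G.Adj v w) ∧
    (∀ v, v ∈ {v | s v = true} ∨ ∃ w ∈ {v | s v = true}, G.Adj v w) := by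
  constructor
  · intro v hv w hw hadj
    rcases le_total (deg G w) (deg G v) with h | h
    · exact hstable v (Or.inr ⟨hv, w, hadj, h, hw⟩)
    · exact hstable w (Or.inr ⟨hw, v, hadj.symm, h, hv⟩)
  · intro v
    by_cases hv : s v = true
    · exact Or.inl hv
    · right
      simp only [Bool.not_eq_true] at hv
      by_contra hc
      push_neg at hc
      refine hstable v (Or.inl ⟨hv, fun w hw hd => ?_⟩)
      simp only [Set.mem_setOf_eq] at hc
      have := hc w
      by_contra h
      simp only [Bool.not_eq_false] at h
      exact this h hw
end

section
/- Algorithm A_MIS stabilizes on every finite simple graph under the central scheduler: there is no infinite sequence of configurations s₀, s₁, s₂, … in which each sᵢ₊₁ is obtained from sᵢ by a move; equivalently, the move relation of A_MIS is well-founded, so every execution reaches a stable configuration after finitely many moves. -/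
/-- A_MIS stabilizes on every finite simple graph under the central scheduler:
there is no infinite execution, i.e. no infinite sequence of configurations in
which each is obtained from the previous one by a move. -/
theorem stmt1 {V : Type*} [Fintype V] [DecidableEq V] (G : SimpleGraph V) :
    ¬ ∃ f : ℕ → (V → Bool), ∀ i, Move G (f i) (f (i + 1)) := by
  classical
  rintro ⟨f, hf⟩
  choose mv hmv hupd using hf
  -- a non-moved vertex keeps its state
  have hne : ∀ k w, w ≠ mv k → f (k + 1) w = f k w := by
    intro k w h
    rw [hupd k, Function.update_of_ne h]
  have hflip : ∀ k, f (k + 1) (mv k) = !(f k (mv k)) := by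
    intro k; rw [hupd k, Function.update_self]
  -- state unchanged on an interval without moves of w
  have hsame : ∀ (w : V) (a b : ℕ), a ≤ b → (∀ k, a ≤ k → k < b → mv k ≠ w) →
      f b w = f a w := by
    intro w a b hab
    induction b, hab using Nat.le_induction with
    | base => intro _; rfl
    | succ b hb ih =>
      intro h
      rw [hne b w (Ne.symm (h b hb (Nat.lt_succ_self b)))]
      exact ih (fun k hk1 hk2 => h k hk1 (Nat.lt_succ_of_lt hk2))
  -- some vertex moves infinitely often
  obtain ⟨v0, hv0⟩ := Finite.exists_infinite_fiber mv
  set S : Set V := {v | (mv ⁻¹' {v}).Infinite} with hSdef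
  have hS : S.Nonempty := ⟨v0, Set.infinite_coe_iff.mp hv0⟩
  have hDne : (deg G '' S).Nonempty := hS.image _
  set d := sInf (deg G '' S) with hddef
  obtain ⟨v, hvS, hvd⟩ := Nat.sInf_mem hDne
  have hmin : ∀ w : V, deg G w < d → ¬ w ∈ S := by
    intro w hw hwS
    have : d ≤ deg G w := Nat.sInf_le (Set.mem_image_of_mem _ hwS)
    omega
  -- times with low-degree moves form a finite set
  have hB : {i : ℕ | deg G (mv i) < d}.Finite := by
    have heq : {i : ℕ | deg G (mv i) < d}
        = ⋃ w ∈ {w : V | deg G w < d}, mv ⁻¹' {w} := by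
      ext i; simp
    rw [heq]
    apply Set.Finite.biUnion (Set.toFinite _)
    intro w hw
    by_contra h
    exact hmin w hw h
  obtain ⟨N, hN⟩ := hB.bddAbove
  have hNlt : ∀ i, N < i → d ≤ deg G (mv i) := by
    intro i hi
    by_contra h
    have : i ≤ N := hN (show i ∈ {i : ℕ | deg G (mv i) < d} by
      simp only [Set.mem_setOf_eq]; omega)
    omega
  -- next move of v after any time t
  have hvI : (mv ⁻¹' {v}).Infinite := hvS
  have hnext : ∀ t : ℕ, ∃ j, t < j ∧ mv j = v ∧ ∀ k, t < k → k < j → mv k ≠ v := by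
    intro t
    obtain ⟨m, hm, hm2⟩ := hvI.exists_gt t
    have hP : ∃ j, t < j ∧ mv j = v := ⟨m, hm2, hm⟩
    refine ⟨Nat.find hP, (Nat.find_spec hP).1, (Nat.find_spec hP).2, ?_⟩
    intro k hk1 hk2 hk3
    exact (Nat.find_min hP hk2) ⟨hk1, hk3⟩
  -- find a move of v after N with state false (an R1 move)
  have hex : ∃ i, N < i ∧ mv i = v ∧ f i v = false := by
    obtain ⟨t1, ht1N, ht1v, _⟩ := hnext N
    rcases Bool.eq_false_or_eq_true (f t1 v) with h | h
    · obtain ⟨j, hj1, hj2, hj3⟩ := hnext t1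
      refine ⟨j, by omega, hj2, ?_⟩
      have h1 : f j v = f (t1 + 1) v :=
        hsame v (t1 + 1) j hj1 (fun k hk1 hk2 => hj3 k (by omega) hk2)
      have h2 : f (t1 + 1) v = !(f t1 v) := ht1v ▸ hflip t1
      rw [h1, h2, h]
      rfl
    · exact ⟨t1, ht1N, ht1v, h⟩
  obtain ⟨i, hiN, hiv, hif⟩ := hex
  obtain ⟨j, hij, hjv, hbet⟩ := hnext i
  -- v is IN throughout (i, j]
  have hvtrue : ∀ k, i + 1 ≤ k → k ≤ j → f k v = true := by
    intro k hk1 hk2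
    have h1 : f k v = f (i + 1) v :=
      hsame v (i + 1) k hk1 (fun l hl1 hl2 => hbet l (by omega) (by omega))
    have h2 : f (i + 1) v = !(f i v) := hiv ▸ hflip i
    rw [h1, h2, hif]
    rfl
  -- move at i is R1
  have hR1 : ∀ w, G.Adj v w → deg G w ≤ deg G v → f i w = false := by
    have := hmv i
    rw [hiv] at this
    rcases this with ⟨_, h⟩ | ⟨h, _⟩
    · exact h
    · rw [hif] at h; exact absurd h (by simp)
  -- move at j is R2
  have hR2 : ∃ w, G.Adj v w ∧ deg G w ≤ deg G v ∧ f j w = true := by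
    have := hmv j
    rw [hjv] at this
    rcases this with ⟨h, _⟩ | ⟨_, h⟩
    · rw [hvtrue j (by omega) le_rfl] at h; exact absurd h (by simp)
    · exact h
  obtain ⟨w, hadj, hdeg, hjw⟩ := hR2
  have hwv : w ≠ v := fun h => (G.irrefl (h ▸ hadj))
  -- w was OUT at i+1
  have hiw : f (i + 1) w = f i w := hne i w (fun h => hwv (h.trans hiv))
  have hiw0 : f (i + 1) w = false := hiw.trans (hR1 w hadj hdeg)
  -- there is a least move of w in [i+1, j)
  have hPw : ∃ k, (i + 1 ≤ k ∧ k < j) ∧ mv k = w := by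
    by_contra h
    push_neg at h
    have : f j w = f (i + 1) w :=
      hsame w (i + 1) j hij (fun k hk1 hk2 => h k ⟨hk1, hk2⟩)
    rw [hjw, hiw0] at this
    exact absurd this (by simp)
  let k := Nat.find hPw
  obtain ⟨⟨hk1, hk2⟩, hk3⟩ := Nat.find_spec hPw
  have hkw0 : f k w = false := by
    have : f k w = f (i + 1) w := by
      apply hsame w (i + 1) k hk1
      intro l hl1 hl2 hl3
      exact (Nat.find_min hPw hl2) ⟨⟨hl1, by omega⟩, hl3⟩
    rw [this, hiw0]
  -- the move at k is an R1 move of w, so deg w < deg v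
  have hkEn := hmv k
  rw [hk3] at hkEn
  rcases hkEn with ⟨_, hall⟩ | ⟨h, _⟩
  · -- all ≤-degree neighbors of w are OUT at k, but v is adjacent and IN
    have hkv : f k v = true := hvtrue k hk1 (by omega)
    have hdvw : ¬ deg G v ≤ deg G w := by
      intro hle
      have := hall v hadj.symm hle
      rw [hkv] at this; exact absurd this (by simp)
    have hlt : deg G w < deg G v := lt_of_not_ge hdvw
    have hge := hNlt k (by omega)
    rw [hk3] at hge
    omega
  · rw [hkw0] at h; exact absurd h (by simp)
end

section
/- For every w ≥ 1 there exists a finite simple graph G with exactly 5w vertices and maximum degree w + 2 that admits an execution of algorithm A_MIS under the central scheduler, starting from the configuration in which every vertex has state OUT, consisting of at least w² moves. -/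
open Finset

section Execution

variable {V : Type*} [DecidableEq V] (G : SimpleGraph V)

def ReachIn (n : ℕ) (s t : V → Bool) : Prop :=
  ∃ f : ℕ → V → Bool, f 0 = s ∧ f n = t ∧ ∀ i < n, Move G (f i) (f (i + 1))

variable {G}

theorem ReachIn.of_forall_move {n : ℕ} {c : ℕ → V → Bool}
    (h : ∀ k < n, Move G (c k) (c (k + 1))) : ReachIn G n (c 0) (c n) :=
  ⟨c, rfl, rfl, h⟩

theorem ReachIn.of_forall_move_rev {n : ℕ} {c : ℕ → V → Bool}
    (h : ∀ k < n, Move G (c (k + 1)) (c k)) : ReachIn G n (c n) (c 0) := by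
  have key := ReachIn.of_forall_move (G := G) (n := n) (c := fun k => c (n - k)) fun k hk => by
    simpa [show n - k = n - (k + 1) + 1 by omega] using h (n - (k + 1)) (by omega)
  simpa using key

theorem ReachIn.single {s t : V → Bool} (h : Move G s t) : ReachIn G 1 s t :=
  ReachIn.of_forall_move (c := fun k => if k = 0 then s else t) fun k hk => by
    simpa [show k = 0 by omega] using h

theorem ReachIn.trans {m n : ℕ} {s t u : V → Bool} (h₁ : ReachIn G m s t)
    (h₂ : ReachIn G n t u) : ReachIn G (m + n) s u := by
  obtain ⟨f, hf0, hfm, hf⟩ := h₁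
  obtain ⟨g, hg0, hgn, hg⟩ := h₂
  have glue : ∀ i, m ≤ i → (if i ≤ m then f i else g (i - m)) = g (i - m) := by
    intro i hi
    split_ifs with him
    · rw [show i = m by omega, hfm, Nat.sub_self, hg0]
    · rfl
  refine ⟨fun i => if i ≤ m then f i else g (i - m), by simpa using hf0, ?_, fun i hi => ?_⟩
  · dsimp only
    rw [glue _ (Nat.le_add_right m n), Nat.add_sub_cancel_left, hgn]
  · dsimp only
    rcases lt_or_ge i m with him | him
    · rw [if_pos him.le, if_pos (show i + 1 ≤ m by omega)]
      exact hf i him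
    · rw [glue i him, glue (i + 1) (by omega), show i + 1 - m = i - m + 1 by omega]
      exact hg _ (by omega)

end Execution

theorem deg_comap_val {n : ℕ} (H : SimpleGraph ℕ) (a : Fin n) :
    deg (H.comap Fin.val) a = {b | b < n ∧ H.Adj a b}.ncard := by
  have himage : Fin.val '' (H.comap Fin.val).neighborSet a = {b | b < n ∧ H.Adj a b} := by
    ext b
    constructor
    · rintro ⟨c, hc, rfl⟩
      exact ⟨c.isLt, hc⟩
    · rintro ⟨hb, hab⟩
      exact ⟨⟨b, hb⟩, hab, rfl⟩
  rw [deg, Nat.card_coe_set_eq, ← himage, Set.ncard_image_of_injective _ Fin.val_injective]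

namespace HubSpoke

/-- Vertices of `Fin (5 * w)`: hubs `j < w`, spokes `w + i`, spoke leaves `2w + i`, and the
two leaves `3w + j`, `4w + j` of hub `j`. -/
def rel (w a b : ℕ) : Prop :=
  (a < w ∧ w ≤ b ∧ b < 2 * w) ∨ (w ≤ a ∧ a < 2 * w ∧ b = a + w) ∨
    (a < w ∧ (b = a + 3 * w ∨ b = a + 4 * w))

def graph (w : ℕ) : SimpleGraph (Fin (5 * w)) :=
  (SimpleGraph.fromRel (rel w)).comap Fin.val

theorem graph_adj {w : ℕ} {a b : Fin (5 * w)} :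
    (graph w).Adj a b ↔ (a : ℕ) ≠ b ∧ (rel w a b ∨ rel w b a) :=
  SimpleGraph.fromRel_adj _ _ _

theorem deg_eq_ncard {w : ℕ} (a : Fin (5 * w)) (N : Finset ℕ)
    (hN : ∀ b, b ∈ N ↔ b < 5 * w ∧ (a : ℕ) ≠ b ∧ (rel w a b ∨ rel w b a)) :
    deg (graph w) a = #N := by
  rw [graph, deg_comap_val, ← Set.ncard_coe_finset]
  congr 1
  ext b
  simp [hN]

theorem deg_hub {w : ℕ} {a : Fin (5 * w)} (ha : (a : ℕ) < w) : deg (graph w) a = w + 2 := by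
  rw [deg_eq_ncard a (insert (a + 3 * w) (insert (a + 4 * w) (Ico w (2 * w))))]
  · rw [card_insert_of_notMem (by simp; omega), card_insert_of_notMem (by simp; omega),
      Nat.card_Ico]
    omega
  · intro b
    simp only [mem_insert, mem_Ico, rel]
    omega

theorem deg_spoke {w : ℕ} {a : Fin (5 * w)} (ha : w ≤ (a : ℕ)) (ha' : (a : ℕ) < 2 * w) :
    deg (graph w) a = w + 1 := by
  rw [deg_eq_ncard a (insert (a + w) (range w))]
  · rw [card_insert_of_notMem (by simp), card_range]
  · intro b
    simp only [mem_insert, mem_range, rel]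
    omega

theorem deg_leaf {w : ℕ} {a : Fin (5 * w)} (ha : 2 * w ≤ (a : ℕ)) : deg (graph w) a = 1 := by
  have := a.isLt
  rw [deg_eq_ncard a {if a < 3 * w then a - w else if a < 4 * w then a - 3 * w else a - 4 * w}]
  · rw [card_singleton]
  · intro b
    simp only [mem_singleton, rel]
    split_ifs <;> omega

theorem maxDeg_graph {w : ℕ} (hw : 1 ≤ w) : maxDeg (graph w) = w + 2 := by
  refine le_antisymm (Finset.sup_le fun a _ => ?_) ?_
  · rcases lt_or_ge (a : ℕ) w with h₁ | h₁
    · exact (deg_hub h₁).le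
    rcases lt_or_ge (a : ℕ) (2 * w) with h₂ | h₂
    · rw [deg_spoke h₁ h₂]; omega
    · rw [deg_leaf h₂]; omega
  · exact (deg_hub (a := ⟨0, by omega⟩) hw).symm.le.trans (le_sup (mem_univ _))

def IsIn (w hubs lo hi leaves u : ℕ) : Prop :=
  u < hubs ∨ (w + lo ≤ u ∧ u < w + hi) ∨ (2 * w ≤ u ∧ u < 2 * w + leaves)

instance (w hubs lo hi leaves u : ℕ) : Decidable (IsIn w hubs lo hi leaves u) :=
  inferInstanceAs (Decidable (_ ∨ _ ∨ _))

def config (w hubs lo hi leaves : ℕ) : Fin (5 * w) → Bool :=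
  fun v => decide (IsIn w hubs lo hi leaves v)

theorem config_eq_true {w hubs lo hi leaves : ℕ} {v : Fin (5 * w)} :
    config w hubs lo hi leaves v = true ↔ IsIn w hubs lo hi leaves v :=
  decide_eq_true_iff

theorem config_eq_false {w hubs lo hi leaves : ℕ} {v : Fin (5 * w)} :
    config w hubs lo hi leaves v = false ↔ ¬IsIn w hubs lo hi leaves v :=
  decide_eq_false_iff_not

theorem move_config {w hubs lo hi leaves hubs' lo' hi' leaves' : ℕ} (v : Fin (5 * w))
    (hv : Enabled (graph w) (config w hubs lo hi leaves) v)
    (hflip : ∀ u < 5 * w,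
      (IsIn w hubs' lo' hi' leaves' u ↔ (IsIn w hubs lo hi leaves u ↔ u ≠ v))) :
    Move (graph w) (config w hubs lo hi leaves) (config w hubs' lo' hi' leaves') := by
  refine ⟨v, hv, funext fun u => ?_⟩
  rw [Function.update_apply]
  split_ifs with huv
  · subst huv
    rw [Bool.eq_iff_iff, Bool.not_eq_true', config_eq_true, config_eq_false]
    simpa using hflip u u.isLt
  · rw [Bool.eq_iff_iff, config_eq_true, config_eq_true]
    simpa [Fin.val_ne_iff.mpr huv] using hflip u u.isLt

variable {w i : ℕ}

theorem move_hub_in (hi : i < w) {k : ℕ} (hk : k < w) :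
    Move (graph w) (config w k i i i) (config w (k + 1) i i i) := by
  refine move_config ⟨k, by omega⟩ (Or.inl ⟨config_eq_false.mpr ?_, fun b hb _ => ?_⟩)
    (by intro u _; simp only [IsIn]; omega)
  · simp only [IsIn]; omega
  rw [graph_adj] at hb
  simp only [config_eq_false, IsIn, rel] at hb ⊢
  omega

theorem move_spoke_in (hi : i < w) :
    Move (graph w) (config w w i i i) (config w w i (i + 1) i) := by
  refine move_config ⟨w + i, by omega⟩
    (Or.inl ⟨config_eq_false.mpr ?_, fun b hb hdeg => ?_⟩)
    (by intro u _; simp only [IsIn]; omega)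
  · simp only [IsIn]; omega
  rcases lt_or_ge (b : ℕ) w with hbw | hbw
  · rw [deg_hub hbw, deg_spoke (Nat.le_add_right w i) (by omega : w + i < 2 * w)] at hdeg
    omega
  rw [graph_adj] at hb
  simp only [config_eq_false, IsIn, rel] at hb ⊢
  omega

theorem move_hub_out (hi : i < w) {k : ℕ} (hk : k < w) :
    Move (graph w) (config w (k + 1) i (i + 1) i) (config w k i (i + 1) i) := by
  refine move_config ⟨k, by omega⟩
    (Or.inr ⟨config_eq_true.mpr ?_, ⟨w + i, by omega⟩, ?_, ?_, config_eq_true.mpr ?_⟩)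
    (by intro u _; simp only [IsIn]; omega)
  · simp only [IsIn]; omega
  · rw [graph_adj]; simp only [rel]; omega
  · rw [deg_spoke (Nat.le_add_right w i) (by omega : w + i < 2 * w), deg_hub (by omega : k < w)]
    omega
  · simp only [IsIn]; omega

theorem move_leaf_in (hi : i < w) :
    Move (graph w) (config w 0 i (i + 1) i) (config w 0 i (i + 1) (i + 1)) := by
  refine move_config ⟨2 * w + i, by omega⟩
    (Or.inl ⟨config_eq_false.mpr ?_, fun b hb hdeg => ?_⟩)
    (by intro u _; simp only [IsIn]; omega)
  · simp only [IsIn]; omega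
  rw [graph_adj] at hb
  simp only [rel] at hb
  rw [deg_spoke (by omega) (by omega), deg_leaf (Nat.le_add_right (2 * w) i)] at hdeg
  omega

theorem move_spoke_out (hi : i < w) :
    Move (graph w) (config w 0 i (i + 1) (i + 1)) (config w 0 (i + 1) (i + 1) (i + 1)) := by
  refine move_config ⟨w + i, by omega⟩
    (Or.inr ⟨config_eq_true.mpr ?_, ⟨2 * w + i, by omega⟩, ?_, ?_, config_eq_true.mpr ?_⟩)
    (by intro u _; simp only [IsIn]; omega)
  · simp only [IsIn]; omega
  · rw [graph_adj]; simp only [rel]; omega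
  · rw [deg_leaf (Nat.le_add_right (2 * w) i),
      deg_spoke (Nat.le_add_right w i) (by omega : w + i < 2 * w)]
    omega
  · simp only [IsIn]; omega

theorem reachIn_round (hi : i < w) :
    ReachIn (graph w) (2 * w + 3) (config w 0 i i i) (config w 0 (i + 1) (i + 1) (i + 1)) := by
  have hubs_in : ReachIn (graph w) w (config w 0 i i i) (config w w i i i) :=
    ReachIn.of_forall_move (c := fun k => config w k i i i) fun _ hk => move_hub_in hi hk
  have hubs_out : ReachIn (graph w) w (config w w i (i + 1) i) (config w 0 i (i + 1) i) :=
    ReachIn.of_forall_move_rev (c := fun k => config w k i (i + 1) i) fun _ hk =>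
      move_hub_out hi hk
  have round := (((hubs_in.trans (.single (move_spoke_in hi))).trans hubs_out).trans
    (.single (move_leaf_in hi))).trans (.single (move_spoke_out hi))
  rwa [show w + 1 + w + 1 + 1 = 2 * w + 3 by ring] at round

theorem reachIn_rounds {n : ℕ} (hn : n ≤ w) :
    ReachIn (graph w) (n * (2 * w + 3)) (config w 0 0 0 0) (config w 0 n n n) := by
  induction n with
  | zero => exact ⟨fun _ => config w 0 0 0 0, rfl, rfl, by simp⟩
  | succ n ih =>
    rw [Nat.succ_mul n]
    exact (ih (by omega)).trans (reachIn_round (by omega))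

theorem config_zero : config w 0 0 0 0 = fun _ => false :=
  funext fun _ => config_eq_false.mpr (by simp only [IsIn]; omega)

end HubSpoke

/-- For every `w ≥ 1` there is a graph with exactly `5w` vertices and maximum
degree `w + 2` admitting an execution of A_MIS under the central scheduler,
starting from the all-OUT configuration, with at least `w ^ 2` moves. -/
theorem stmt3 (w : ℕ) (hw : 1 ≤ w) :
    ∃ G : SimpleGraph (Fin (5 * w)), maxDeg G = w + 2 ∧
      ∃ (m : ℕ) (f : ℕ → Fin (5 * w) → Bool),
        w ^ 2 ≤ m ∧ f 0 = (fun _ => false) ∧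
        ∀ i < m, Move G (f i) (f (i + 1)) := by
  obtain ⟨f, hf0, -, hf⟩ := HubSpoke.reachIn_rounds (w := w) le_rfl
  exact ⟨HubSpoke.graph w, HubSpoke.maxDeg_graph hw, w * (2 * w + 3), f, by nlinarith,
    hf0.trans HubSpoke.config_zero, hf⟩
end

section
/- For every w ≥ 1 there exists a finite simple graph G with exactly 12w vertices and maximum degree w + 4 that admits an execution of algorithm A_MIS under the central scheduler, starting from the configuration in which every vertex has state OUT, consisting of at least w³ moves. -/
inductive Run {V : Type*} [DecidableEq V] (G : SimpleGraph V) :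
    ℕ → (V → Bool) → (V → Bool) → Prop
  | refl (s : V → Bool) : Run G 0 s s
  | tail {n : ℕ} {s t r : V → Bool} : Run G n s t → Move G t r → Run G (n + 1) s r

namespace Run

variable {V : Type*} [DecidableEq V] {G : SimpleGraph V}

theorem single {s t : V → Bool} (h : Move G s t) : Run G 1 s t :=
  (refl s).tail h

theorem of_length_eq {m n : ℕ} {s t : V → Bool} (h : Run G m s t) (hmn : m = n) :
    Run G n s t :=
  hmn ▸ h

theorem trans {m n : ℕ} {s t r : V → Bool} (h₁ : Run G m s t) (h₂ : Run G n t r) :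
    Run G (m + n) s r := by
  induction h₂ with
  | refl => exact h₁
  | tail _ hmove ih => exact (ih h₁).tail hmove

theorem iterate {n k : ℕ} (σ : ℕ → V → Bool) (h : ∀ c < n, Run G k (σ c) (σ (c + 1))) :
    Run G (n * k) (σ 0) (σ n) := by
  induction n with
  | zero => rw [Nat.zero_mul]; exact .refl _
  | succ n ih =>
    rw [Nat.succ_mul]
    exact (ih fun c hc => h c (by omega)).trans (h n (by omega))

theorem exists_execution {n : ℕ} {s t : V → Bool} (h : Run G n s t) :
    ∃ f : ℕ → V → Bool, f 0 = s ∧ f n = t ∧ ∀ i < n, Move G (f i) (f (i + 1)) := by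
  induction h with
  | refl s => exact ⟨fun _ => s, rfl, rfl, fun i hi => absurd hi (Nat.not_lt_zero i)⟩
  | @tail n s t r _ hmove ih =>
    obtain ⟨f, hf0, hfn, hf⟩ := ih
    refine ⟨fun i => if i ≤ n then f i else r, by simpa using hf0, by simp, fun i hi => ?_⟩
    rcases Nat.lt_or_eq_of_le (Nat.le_of_lt_succ hi) with hi | rfl
    · simpa [hi.le, Nat.succ_le_of_lt hi] using hf i hi
    · simpa [hfn] using hmove

end Run

theorem deg_fromRel_fin {n : ℕ} (r : ℕ → ℕ → Prop) [DecidableRel r] (v : Fin n) :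
    deg (SimpleGraph.fromRel fun a b : Fin n => r a b) v =
      ((Finset.range n).filter fun b => (v : ℕ) ≠ b ∧ (r v b ∨ r b v)).card := by
  rw [deg, Nat.card_coe_set_eq, ← Set.ncard_image_of_injective _ Fin.val_injective,
    ← Set.ncard_coe_finset]
  congr 1
  ext b
  simp only [Set.mem_image, SimpleGraph.mem_neighborSet, SimpleGraph.fromRel_adj,
    Finset.coe_filter, Finset.mem_range, Set.mem_ofPred_eq]
  constructor
  · rintro ⟨w, ⟨hne, hr⟩, rfl⟩
    exact ⟨w.isLt, Fin.val_ne_of_ne hne, hr⟩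
  · rintro ⟨hb, hne, hr⟩
    exact ⟨⟨b, hb⟩, ⟨fun h => hne (congrArg Fin.val h), hr⟩, rfl⟩

namespace AMIS

/- Vertex `a` stands for: a load if `a < u + 3`, `r i = u + 3 + i`, `x i = 2u + 3 + i`,
`R k = 3u + 3 + k`, `X k = 4u + 4 + k`, five pads `5u + 5, …, 5u + 9` (extra neighbours of the
loads), `5u + 10` (of every `x i`), `5u + 11` (of every `R k`); the rest are isolated.
Each edge is listed once, from its endpoint of larger degree (`degAt_lt_of_lowerAdj`). -/
def lowerAdj (u a b : ℕ) : Prop :=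
  (a < u + 3 ∧ u + 3 ≤ b ∧ b < 2 * u + 3) ∨
  (a < u + 3 ∧ 5 * u + 5 ≤ b ∧ b < 5 * u + 10) ∨
  (u + 3 ≤ a ∧ a < 2 * u + 3 ∧ b = a + u) ∨
  (2 * u + 3 ≤ a ∧ a < 3 * u + 3 ∧ 3 * u + 3 ≤ b ∧ b < 4 * u + 4) ∨
  (2 * u + 3 ≤ a ∧ a < 3 * u + 3 ∧ b = 5 * u + 10) ∨
  (3 * u + 3 ≤ a ∧ a < 4 * u + 4 ∧ b = a + u + 1) ∨
  (3 * u + 3 ≤ a ∧ a < 4 * u + 4 ∧ b = 5 * u + 11)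

instance (u : ℕ) : DecidableRel (lowerAdj u) := fun _ _ => by unfold lowerAdj; infer_instance

def graph (u : ℕ) : SimpleGraph (Fin (12 * (u + 1))) :=
  SimpleGraph.fromRel fun a b => lowerAdj u a b

def degAt (u a : ℕ) : ℕ :=
  if a < u + 3 then u + 5
  else if a < 2 * u + 3 then u + 4
  else if a < 3 * u + 3 then u + 3
  else if a < 4 * u + 4 then u + 2
  else if a < 5 * u + 5 then 1
  else if a < 5 * u + 10 then u + 3
  else if a = 5 * u + 10 then u
  else if a = 5 * u + 11 then u + 1
  else 0

variable {u : ℕ}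

theorem lt_card_of_lowerAdj {a b : ℕ} (h : lowerAdj u a b) : b < 12 * (u + 1) := by
  unfold lowerAdj at h; omega

theorem lt_of_lowerAdj {a b : ℕ} (h : lowerAdj u a b) : a < b := by
  unfold lowerAdj at h; omega

theorem degAt_lt_of_lowerAdj {a b : ℕ} (h : lowerAdj u a b) : degAt u b < degAt u a := by
  unfold degAt
  rcases h with h | h | h | h | h | h | h <;>
    simp (disch := omega) only [if_pos, if_neg] <;> omega

theorem degAt_le (a : ℕ) : degAt u a ≤ u + 5 := by
  unfold degAt; split_ifs <;> omega

theorem filter_adj_eq {a : ℕ} (S : Finset ℕ)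
    (h : ∀ b, a ≠ b ∧ (lowerAdj u a b ∨ lowerAdj u b a) ↔ b ∈ S) :
    (Finset.range (12 * (u + 1))).filter
      (fun b => a ≠ b ∧ (lowerAdj u a b ∨ lowerAdj u b a)) = S := by
  ext b
  rw [Finset.mem_filter, Finset.mem_range, ← h, and_iff_right_iff_imp]
  rintro ⟨-, hb | hb⟩
  · exact lt_card_of_lowerAdj hb
  · unfold lowerAdj at hb; omega

theorem deg_graph (v : Fin (12 * (u + 1))) : deg (graph u) v = degAt u v := by
  rw [graph, deg_fromRel_fin]
  generalize (v : ℕ) = a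
  unfold degAt
  split_ifs
  -- `simp` settles each linear atom by `omega`; `omega` alone on the 14-way disjunction is too slow
  · rw [filter_adj_eq (Finset.Ico (u + 3) (2 * u + 3) ∪ Finset.Ico (5 * u + 5) (5 * u + 10))
      (fun b => by simp (disch := omega) [lowerAdj, eq_true, eq_false]),
      Finset.card_union_of_disjoint
        (Finset.disjoint_left.2 fun b => by simp only [Finset.mem_Ico]; omega)]
    simp only [Nat.card_Ico]; omega
  · rw [filter_adj_eq (insert (a + u) (Finset.range (u + 3)))
      (fun b => by simp (disch := omega) [lowerAdj, eq_true, eq_false]),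
      Finset.card_insert_of_notMem (by simp only [Finset.mem_range]; omega), Finset.card_range]
  · rw [filter_adj_eq (insert (a - u) (insert (5 * u + 10) (Finset.Ico (3 * u + 3) (4 * u + 4))))
      (fun b => by simp (disch := omega) [lowerAdj, eq_true, eq_false]),
      Finset.card_insert_of_notMem (by simp only [Finset.mem_insert, Finset.mem_Ico]; omega),
      Finset.card_insert_of_notMem (by simp only [Finset.mem_Ico]; omega), Nat.card_Ico]
    omega
  · rw [filter_adj_eq
      (insert (a + u + 1) (insert (5 * u + 11) (Finset.Ico (2 * u + 3) (3 * u + 3))))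
      (fun b => by simp (disch := omega) [lowerAdj, eq_true, eq_false]),
      Finset.card_insert_of_notMem (by simp only [Finset.mem_insert, Finset.mem_Ico]; omega),
      Finset.card_insert_of_notMem (by simp only [Finset.mem_Ico]; omega), Nat.card_Ico]
    omega
  · rw [filter_adj_eq {a - (u + 1)}
      (fun b => by simp (disch := omega) [lowerAdj, eq_true, eq_false]), Finset.card_singleton]
  · rw [filter_adj_eq (Finset.range (u + 3))
      (fun b => by simp (disch := omega) [lowerAdj, eq_true, eq_false]), Finset.card_range]
  · rw [filter_adj_eq (Finset.Ico (2 * u + 3) (3 * u + 3))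
      (fun b => by simp (disch := omega) [lowerAdj, eq_true, eq_false]), Nat.card_Ico]
    omega
  · rw [filter_adj_eq (Finset.Ico (3 * u + 3) (4 * u + 4))
      (fun b => by simp (disch := omega) [lowerAdj, eq_true, eq_false]), Nat.card_Ico]
    omega
  · rw [filter_adj_eq ∅ (fun b => by simp (disch := omega) [lowerAdj, eq_true, eq_false]),
      Finset.card_empty]

theorem adj_of_lowerAdj {v w : Fin (12 * (u + 1))} (h : lowerAdj u v w) : (graph u).Adj v w := by
  refine (SimpleGraph.fromRel_adj _ _ _).2 ⟨fun hvw => ?_, Or.inl h⟩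
  exact (lt_of_lowerAdj h).ne (congrArg Fin.val hvw)

theorem deg_lt_of_lowerAdj {v w : Fin (12 * (u + 1))} (h : lowerAdj u v w) :
    deg (graph u) w < deg (graph u) v := by
  rw [deg_graph, deg_graph]; exact degAt_lt_of_lowerAdj h

theorem lowerAdj_of_adj_of_deg_le {v w : Fin (12 * (u + 1))} (hadj : (graph u).Adj v w)
    (hdeg : deg (graph u) w ≤ deg (graph u) v) : lowerAdj u v w :=
  ((SimpleGraph.fromRel_adj _ _ _).1 hadj).2.resolve_right
    fun h => (deg_lt_of_lowerAdj h).not_ge hdeg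

theorem maxDeg_graph : maxDeg (graph u) = u + 5 := by
  refine le_antisymm (Finset.sup_le fun v _ => deg_graph v ▸ degAt_le _) ?_
  have h : deg (graph u) 0 = u + 5 := by rw [deg_graph]; simp [degAt]
  exact h ▸ Finset.le_sup (Finset.mem_univ _)

open Classical in
noncomputable def conf (u : ℕ) (P : ℕ → Prop) : Fin (12 * (u + 1)) → Bool :=
  fun v => decide (P v)

@[simp] theorem conf_eq_true {P : ℕ → Prop} {v : Fin (12 * (u + 1))} :
    conf u P v = true ↔ P v := by
  simp [conf]

@[simp] theorem conf_eq_false {P : ℕ → Prop} {v : Fin (12 * (u + 1))} :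
    conf u P v = false ↔ ¬P v := by
  simp [conf]

theorem conf_congr {P Q : ℕ → Prop} (h : ∀ b, P b ↔ Q b) : conf u P = conf u Q := by
  rw [show P = Q from funext fun b => propext (h b)]

theorem conf_false : conf u (fun _ => False) = fun _ => false := by
  funext v; simp [conf]

theorem enabled_conf_iff (P : ℕ → Prop) (v : Fin (12 * (u + 1))) :
    Enabled (graph u) (conf u P) v ↔
      (¬P v ∧ ∀ b, lowerAdj u v b → ¬P b) ∨ (P v ∧ ∃ b, lowerAdj u v b ∧ P b) := by
  simp only [Enabled, conf_eq_true, conf_eq_false]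
  refine or_congr (and_congr_right fun _ => ⟨fun h b hb => ?_, fun h w hadj hdeg => ?_⟩)
    (and_congr_right fun _ => ⟨fun ⟨w, hadj, hdeg, hw⟩ => ?_, fun ⟨b, hb, hPb⟩ => ?_⟩)
  · exact h ⟨b, lt_card_of_lowerAdj hb⟩ (adj_of_lowerAdj hb) (deg_lt_of_lowerAdj hb).le
  · exact h w (lowerAdj_of_adj_of_deg_le hadj hdeg)
  · exact ⟨w, lowerAdj_of_adj_of_deg_le hadj hdeg, hw⟩
  · exact ⟨⟨b, lt_card_of_lowerAdj hb⟩, adj_of_lowerAdj hb, (deg_lt_of_lowerAdj hb).le,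
      hPb⟩

theorem move_conf {P Q : ℕ → Prop} {a : ℕ} (ha : a < 12 * (u + 1))
    (hen : (¬P a ∧ ∀ b, lowerAdj u a b → ¬P b) ∨ (P a ∧ ∃ b, lowerAdj u a b ∧ P b))
    (hQ : ∀ b, Q b ↔ ¬(P b ↔ b = a)) : Move (graph u) (conf u P) (conf u Q) := by
  refine ⟨⟨a, ha⟩, (enabled_conf_iff P _).2 hen, funext fun w => ?_⟩
  rcases eq_or_ne w ⟨a, ha⟩ with rfl | hw
  · rw [Function.update_self, Bool.eq_iff_iff]
    simp [hQ]
  · have hwa : (w : ℕ) ≠ a := fun h => hw (Fin.ext h)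
    rw [Function.update_of_ne hw, Bool.eq_iff_iff]
    simp [hQ, hwa]

theorem move_conf_in {P Q : ℕ → Prop} {a : ℕ} (ha : a < 12 * (u + 1)) (hPa : ¬P a)
    (hlow : ∀ b, lowerAdj u a b → ¬P b) (hQ : ∀ b, Q b ↔ P b ∨ b = a) :
    Move (graph u) (conf u P) (conf u Q) :=
  move_conf ha (Or.inl ⟨hPa, hlow⟩) fun b => by
    rw [hQ]; rcases eq_or_ne b a with rfl | hb <;> simp [*]

theorem move_conf_out {P Q : ℕ → Prop} {a b₀ : ℕ} (ha : a < 12 * (u + 1)) (hPa : P a)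
    (hb₀ : lowerAdj u a b₀) (hPb₀ : P b₀) (hQ : ∀ b, Q b ↔ P b ∧ b ≠ a) :
    Move (graph u) (conf u P) (conf u Q) :=
  move_conf ha (Or.inr ⟨hPa, b₀, hb₀, hPb₀⟩) fun b => by
    rw [hQ]; rcases eq_or_ne b a with rfl | hb <;> simp [*]

theorem run_sweep_in {P Q : ℕ → Prop} {lo n : ℕ} (hn : lo + n ≤ 12 * (u + 1))
    (hP : ∀ a, lo ≤ a → a < lo + n → ¬P a)
    (hlow : ∀ a b, lo ≤ a → a < lo + n → lowerAdj u a b → ¬P b)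
    (hQ : ∀ b, Q b ↔ P b ∨ (lo ≤ b ∧ b < lo + n)) :
    Run (graph u) n (conf u P) (conf u Q) := by
  have h := Run.iterate (G := graph u) (k := 1) (n := n)
    (fun c => conf u fun b => P b ∨ (lo ≤ b ∧ b < lo + c)) fun c hc => .single <|
      move_conf_in (a := lo + c) (by omega) (by simp [hP (lo + c) (by omega) (by omega)])
        (fun b hb => not_or.2
          ⟨hlow _ b (by omega) (by omega) hb, by have := lt_of_lowerAdj hb; omega⟩)
        fun b => by rw [or_assoc]; exact or_congr_right (by omega)
  rwa [Nat.mul_one, conf_congr (P := fun b => _ ∨ _) (fun b => or_iff_left (by omega)),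
    ← conf_congr hQ] at h

theorem run_sweep_out {P Q : ℕ → Prop} {lo n b₀ : ℕ} (hn : lo + n ≤ 12 * (u + 1))
    (hP : ∀ a, lo ≤ a → a < lo + n → P a)
    (hb₀ : ∀ a, lo ≤ a → a < lo + n → lowerAdj u a b₀)
    (hPb₀ : P b₀) (hQ : ∀ b, Q b ↔ P b ∧ ¬(lo ≤ b ∧ b < lo + n)) :
    Run (graph u) n (conf u P) (conf u Q) := by
  have h := Run.iterate (G := graph u) (k := 1) (n := n)
    (fun c => conf u fun b => P b ∧ ¬(lo ≤ b ∧ b < lo + c)) fun c hc => .single <|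
      move_conf_out (a := lo + c) (b₀ := b₀) (by omega)
        ⟨hP (lo + c) (by omega) (by omega), by omega⟩ (hb₀ _ (by omega) (by omega))
        ⟨hPb₀, by have := lt_of_lowerAdj (hb₀ (lo + c) (by omega) (by omega)); omega⟩
        fun b => by rw [and_assoc]; exact and_congr_right fun _ => by omega
  rwa [Nat.mul_one, conf_congr (P := fun b => _ ∧ _) (fun b => and_iff_left (by omega)),
    ← conf_congr hQ] at h

def digits (u k i b : ℕ) : Prop :=
  (2 * u + 3 ≤ b ∧ b < 2 * u + 3 + i) ∨ (4 * u + 4 ≤ b ∧ b < 4 * u + 4 + k)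

/- Loads IN, `x 0, …, x (i - 1)` and `X 0, …, X (k - 1)` IN, everything else OUT. -/
def counter (u k i b : ℕ) : Prop := b < u + 3 ∨ digits u k i b

theorem run_inner_round {k i : ℕ} (hk : k ≤ u + 1) (hi : i < u) :
    Run (graph u) (2 * u + 9) (conf u (counter u k i)) (conf u (counter u k (i + 1))) := by
  have h₁ : Run (graph u) 1 (conf u (counter u k i))
      (conf u fun b => counter u k i b ∨ b = u + 3 + i) :=
    run_sweep_in (lo := u + 3 + i) ?_ ?_ ?_ ?_
  have h₂ : Run (graph u) (u + 3) (conf u fun b => counter u k i b ∨ b = u + 3 + i)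
      (conf u fun b => digits u k i b ∨ b = u + 3 + i) :=
    run_sweep_out (lo := 0) (b₀ := u + 3 + i) ?_ ?_ ?_ ?_ ?_
  have h₃ : Run (graph u) 1 (conf u fun b => digits u k i b ∨ b = u + 3 + i)
      (conf u fun b => digits u k (i + 1) b ∨ b = u + 3 + i) :=
    run_sweep_in (lo := 2 * u + 3 + i) ?_ ?_ ?_ ?_
  have h₄ : Run (graph u) 1 (conf u fun b => digits u k (i + 1) b ∨ b = u + 3 + i)
      (conf u (digits u k (i + 1))) :=
    run_sweep_out (lo := u + 3 + i) (b₀ := 2 * u + 3 + i) ?_ ?_ ?_ ?_ ?_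
  have h₅ : Run (graph u) (u + 3) (conf u (digits u k (i + 1))) (conf u (counter u k (i + 1))) :=
    run_sweep_in (lo := 0) ?_ ?_ ?_ ?_
  · exact (h₁.trans <| h₂.trans <| h₃.trans <| h₄.trans h₅).of_length_eq (by omega)
  all_goals intros; (try simp only [counter, digits, lowerAdj, or_true] at *) <;> omega

theorem run_outer_round {k : ℕ} (hk : k ≤ u) :
    Run (graph u) (u + 3) (conf u (counter u k u)) (conf u (counter u (k + 1) 0)) := by
  have h₁ : Run (graph u) 1 (conf u (counter u k u))
      (conf u fun b => counter u k u b ∨ b = 3 * u + 3 + k) :=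
    run_sweep_in (lo := 3 * u + 3 + k) ?_ ?_ ?_ ?_
  have h₂ : Run (graph u) u (conf u fun b => counter u k u b ∨ b = 3 * u + 3 + k)
      (conf u fun b => counter u k 0 b ∨ b = 3 * u + 3 + k) :=
    run_sweep_out (lo := 2 * u + 3) (b₀ := 3 * u + 3 + k) ?_ ?_ ?_ ?_ ?_
  have h₃ : Run (graph u) 1 (conf u fun b => counter u k 0 b ∨ b = 3 * u + 3 + k)
      (conf u fun b => counter u (k + 1) 0 b ∨ b = 3 * u + 3 + k) :=
    run_sweep_in (lo := 4 * u + 4 + k) ?_ ?_ ?_ ?_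
  have h₄ : Run (graph u) 1 (conf u fun b => counter u (k + 1) 0 b ∨ b = 3 * u + 3 + k)
      (conf u (counter u (k + 1) 0)) :=
    run_sweep_out (lo := 3 * u + 3 + k) (b₀ := 4 * u + 4 + k) ?_ ?_ ?_ ?_ ?_
  · exact (h₁.trans <| h₂.trans <| h₃.trans h₄).of_length_eq (by omega)
  all_goals intros; (try simp only [counter, digits, lowerAdj, or_true] at *) <;> omega

theorem run_inner_rounds {k : ℕ} (hk : k ≤ u + 1) :
    Run (graph u) (u * (2 * u + 9)) (conf u (counter u k 0)) (conf u (counter u k u)) :=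
  Run.iterate (fun i => conf u (counter u k i)) fun _ hi => run_inner_round hk hi

theorem run_outer_rounds :
    Run (graph u) ((u + 1) * (u + 3 + u * (2 * u + 9))) (conf u (counter u 0 u))
      (conf u (counter u (u + 1) u)) :=
  Run.iterate (fun k => conf u (counter u k u)) fun _ hk =>
    (run_outer_round (by omega)).trans (run_inner_rounds (by omega))

theorem run_from_all_out :
    Run (graph u) ((u + 2) * (u + 3 + u * (2 * u + 9))) (fun _ => false)
      (conf u (counter u (u + 1) u)) := by
  have h : Run (graph u) (u + 3) (conf u fun _ => False) (conf u (counter u 0 0)) :=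
    run_sweep_in (lo := 0) (by omega) (fun _ _ _ => not_false) (fun _ _ _ _ _ => not_false)
      fun b => by simp only [counter, digits, false_or]; omega
  rw [conf_false] at h
  exact (h.trans <| (run_inner_rounds (by omega)).trans run_outer_rounds).of_length_eq (by ring)

end AMIS

/-- For every `w ≥ 1` there is a graph with exactly `12w` vertices and maximum
degree `w + 4` admitting an execution of A_MIS under the central scheduler,
starting from the all-OUT configuration, with at least `w ^ 3` moves. -/
theorem stmt4 (w : ℕ) (hw : 1 ≤ w) :
    ∃ G : SimpleGraph (Fin (12 * w)), maxDeg G = w + 4 ∧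
      ∃ (m : ℕ) (f : ℕ → Fin (12 * w) → Bool),
        w ^ 3 ≤ m ∧ f 0 = (fun _ => false) ∧
        ∀ i < m, Move G (f i) (f (i + 1)) := by
  obtain ⟨u, rfl⟩ : ∃ u, w = u + 1 := ⟨w - 1, by omega⟩
  obtain ⟨f, hf₀, -, hf⟩ := (AMIS.run_from_all_out (u := u)).exists_execution
  have hcube : (u + 1) ^ 3 ≤ (u + 2) * (u + 3 + u * (2 * u + 9)) := by
    rw [pow_succ']
    exact Nat.mul_le_mul (by omega) (by nlinarith)
  exact ⟨AMIS.graph u, AMIS.maxDeg_graph, _, f, hcube, hf₀, hf⟩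
end
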